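/- Let X, Y be separable Banach spaces, G ⊆ X open, and f : G → Y a Lipschitz mapping. Then the set of all points x ∈ G at which f is Gâteaux differentiable and Fréchet differentiable along some closed subspace of finite codimension, but not Fréchet differentiable, is σ-upper porous. -/

import Mathlib

open Metric Set Topology

variable {X Y : Type*} [NormedAddCommGroup X] [NormedSpace ℝ X] [CompleteSpace X]
  [NormedAddCommGroup Y] [NormedSpace ℝ Y] [CompleteSpace Y]

/-- `f` is Fréchet differentiable at `a` along the subspace `V`. -/
def FrechetDiffAlong (f : X → Y) (V : Submodule ℝ X) (a : X) : Prop :=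
  DifferentiableAt ℝ (fun v : V => f (a + (v : X))) (0 : V)

/-- `f` is Gâteaux differentiable at `x`. -/
def GateauxDiffAt (f : X → Y) (x : X) : Prop :=
  ∃ T : X →L[ℝ] Y, ∀ u : X, HasDerivAt (fun t : ℝ => f (x + t • u)) (T u) 0

/-- `A` is (upper) porous at `x`. -/
def PorousAt (A : Set X) (x : X) : Prop :=
  ∃ c > (0 : ℝ), ∀ δ > (0 : ℝ), ∃ t, t ∈ ball x δ ∧ t ≠ x ∧ ball t (c * dist t x) ∩ A = ∅

/-- `A` is (upper) porous: porous at each of its points. -/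
def Porous (A : Set X) : Prop := ∀ x ∈ A, PorousAt A x

/-- `A` is σ-(upper) porous: a countable union of porous sets. -/
def SigmaPorous (A : Set X) : Prop :=
  ∃ u : ℕ → Set X, (∀ n, Porous (u n)) ∧ A = ⋃ n, u n

/-!
Fix `x` in the set, with Gâteaux derivative `T`. As `f` is not Fréchet differentiable at `x`,
there are increments `w → 0` with `‖f (x + w) - f x - T w‖ > ε‖w‖`. Modulo the finite-codimensional
subspace `M` their normalized directions accumulate, so `w ≈ v + ‖w‖ • e` with `v ∈ M` and `e` from
a countable dense set; Fréchet differentiability along `M` then moves the defect into the step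
`‖w‖ • e` taken at `x + v`. So, for `g` close to `T e` from a countable dense set, `x` has slope
`≈ g` in direction `e` at `x` itself, but slope off by `2ε` from points `x + v` arbitrarily close
to `x` and inside a cone. With parameters from countable sets this yields countably many sets, each
porous: by the Lipschitz bound, no point of slope `≈ g` in direction `e` lies within distance
`≈ ε‖w‖ / K` of `x + v`.
-/

open Filter

section

variable {E F : Type*} [NormedAddCommGroup E] [NormedAddCommGroup F]

lemma Porous.mono {A B : Set E} (hA : Porous A) (hBA : B ⊆ A) : Porous B := by
  intro x hx
  obtain ⟨c, hc, h⟩ := hA x (hBA hx)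
  refine ⟨c, hc, fun δ hδ => ?_⟩
  obtain ⟨t, htx, hne, hhole⟩ := h δ hδ
  exact ⟨t, htx, hne, subset_eq_empty (inter_subset_inter_right _ hBA) hhole⟩

lemma sigmaPorous_of_subset_iUnion {ι : Type*} [Countable ι] {A : Set E} {u : ι → Set E}
    (hu : ∀ i, Porous (u i)) (hA : A ⊆ ⋃ i, u i) : SigmaPorous A := by
  rcases isEmpty_or_nonempty ι with hι | hι
  · exact ⟨fun _ => ∅, fun _ _ hx => hx.elim, by simpa using hA⟩
  · obtain ⟨φ, hφ⟩ := exists_surjective_nat ι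
    refine ⟨fun n => u (φ n) ∩ A, fun n => (hu (φ n)).mono inter_subset_left, ?_⟩
    rw [← iUnion_inter, hφ.iUnion_comp u, inter_eq_right.2 hA]

lemma porousAt_of_forall_exists_ball {A : Set E} {x : E} (hx : x ∈ A) {C : ℝ} (hC : 0 < C)
    (h : ∀ δ > 0, ∃ z r, 0 < r ∧ dist z x < δ ∧ dist z x ≤ C * r ∧ ball z r ∩ A = ∅) :
    PorousAt A x := by
  refine ⟨C⁻¹, inv_pos.2 hC, fun δ hδ => ?_⟩
  obtain ⟨z, r, hr, hzδ, hzr, hhole⟩ := h δ hδ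
  have hzx : z ≠ x := by
    rintro rfl
    exact (eq_empty_iff_forall_notMem.1 hhole) z ⟨mem_ball_self hr, hx⟩
  refine ⟨z, mem_ball.2 hzδ, hzx, subset_eq_empty (inter_subset_inter_left _ ?_) hhole⟩
  exact ball_subset_ball ((inv_mul_le_iff₀ hC).2 hzr)

variable {f : E → F} {K : NNReal} {G : Set E} {x : E}

lemma LipschitzOnWith.norm_increment_le (hf : LipschitzOnWith K f G) {a b w : E}
    (ha : a ∈ G) (hb : b ∈ G) (haw : a + w ∈ G) (hbw : b + w ∈ G) (y : F) :
    ‖f (a + w) - f a - y‖ ≤ ‖f (b + w) - f b - y‖ + 2 * K * ‖a - b‖ := by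
  have h₁ := hf.norm_sub_le haw hbw
  have h₂ := hf.norm_sub_le hb ha
  rw [add_sub_add_right_eq_sub] at h₁
  rw [norm_sub_rev b a] at h₂
  calc ‖f (a + w) - f a - y‖
      = ‖(f (b + w) - f b - y) + (f (a + w) - f (b + w)) + (f b - f a)‖ := by congr 1; abel
    _ ≤ ‖f (b + w) - f b - y‖ + ‖f (a + w) - f (b + w)‖ + ‖f b - f a‖ := norm_add₃_le
    _ ≤ ‖f (b + w) - f b - y‖ + 2 * K * ‖a - b‖ := by linarith

variable [NormedSpace ℝ E] [NormedSpace ℝ F]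

lemma LipschitzOnWith.norm_remainder_le (hf : LipschitzOnWith K f G) (T : E →L[ℝ] F)
    {u w : E} (hu : x + u ∈ G) (hw : x + w ∈ G) :
    ‖f (x + u) - f x - T u‖ ≤ ‖f (x + w) - f x - T w‖ + (K + ‖T‖) * ‖u - w‖ := by
  have h₁ := hf.norm_sub_le hu hw
  have h₂ := T.le_opNorm (w - u)
  rw [add_sub_add_left_eq_sub] at h₁
  rw [norm_sub_rev w u] at h₂
  calc ‖f (x + u) - f x - T u‖
      = ‖(f (x + w) - f x - T w) + (f (x + u) - f (x + w)) + T (w - u)‖ := by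
        rw [map_sub]; congr 1; abel
    _ ≤ ‖f (x + w) - f x - T w‖ + ‖f (x + u) - f (x + w)‖ + ‖T (w - u)‖ := norm_add₃_le
    _ ≤ ‖f (x + w) - f x - T w‖ + (K + ‖T‖) * ‖u - w‖ := by linarith

lemma LipschitzOnWith.norm_remainder_le_increment (hf : LipschitzOnWith K f G) (T : E →L[ℝ] F)
    {u v e : E} {s : ℝ} (g : F) (hs : 0 ≤ s) (hu : x + u ∈ G) (hvs : x + (v + s • e) ∈ G) :
    ‖f (x + u) - f x - T u‖ ≤ ‖f (x + v + s • e) - f (x + v) - s • g‖ +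
      ‖f (x + v) - f x - T v‖ + s * ‖T e - g‖ + (K + ‖T‖) * ‖u - (v + s • e)‖ := by
  have h := hf.norm_remainder_le T hu hvs
  have hsplit : f (x + (v + s • e)) - f x - T (v + s • e) = (f (x + v + s • e) - f (x + v) - s • g)
      + (f (x + v) - f x - T v) - s • (T e - g) := by
    rw [map_add, map_smul, smul_sub, add_assoc]; abel
  have := _root_.norm_sub_le ((f (x + v + s • e) - f (x + v) - s • g) + (f (x + v) - f x - T v))
    (s • (T e - g))
  rw [← hsplit, norm_smul, Real.norm_of_nonneg hs] at this
  linarith [_root_.norm_add_le (f (x + v + s • e) - f (x + v) - s • g) (f (x + v) - f x - T v)]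

def oscillationSet (f : E → F) (G : Set E) (e : E) (g : F) (ε δ θ : ℝ) : Set E :=
  {x | ball x δ ⊆ G ∧ (∀ t ∈ Ioc 0 δ, ‖f (x + t • e) - f x - t • g‖ ≤ ε * t) ∧
    ∀ ρ > 0, ∃ v : E, ∃ s : ℝ, 0 < s ∧ s ≤ ρ ∧ ‖v‖ ≤ ρ ∧ θ * ‖v‖ ≤ s ∧
      2 * ε * s ≤ ‖f (x + v + s • e) - f (x + v) - s • g‖}

lemma mul_le_norm_sub_of_mem_oscillationSet (hf : LipschitzOnWith K f G) {e : E} {g : F}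
    {ε δ θ s : ℝ} {y z : E} (hy : y ∈ oscillationSet f G e g ε δ θ) (hz : z ∈ G)
    (hzs : z + s • e ∈ G) (hs : 0 < s) (hsδ : s ≤ δ) (hse : s * ‖e‖ < δ)
    (hbad : 2 * ε * s ≤ ‖f (z + s • e) - f z - s • g‖) :
    ε * s ≤ 2 * K * ‖z - y‖ := by
  obtain ⟨hyG, hslope, -⟩ := hy
  have hyG' : y ∈ G := hyG (mem_ball_self (hs.trans_le hsδ))
  have hys : y + s • e ∈ G := hyG <| by
    rwa [mem_ball, dist_eq_norm, add_sub_cancel_left, norm_smul, Real.norm_of_nonneg hs.le]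
  have := hf.norm_increment_le hz hyG' hzs hys (s • g)
  linarith [hslope s ⟨hs, hsδ⟩]

lemma porous_oscillationSet (hf : LipschitzOnWith K f G) (e : E) (g : F) {ε δ θ : ℝ}
    (hε : 0 < ε) (hδ : 0 < δ) (hθ : 0 < θ) : Porous (oscillationSet f G e g ε δ θ) := by
  intro x hx
  refine porousAt_of_forall_exists_ball hx (C := (2 * K + 1) / (ε * θ)) (by positivity)
    fun δ' hδ' => ?_
  set ρ := min (δ / (2 * (1 + ‖e‖))) (δ' / 2)
  have hρ : 0 < ρ := lt_min (by positivity) (by positivity)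
  have hρe : ρ * (2 * (1 + ‖e‖)) ≤ δ := (le_div_iff₀ (by positivity)).1 (min_le_left _ _)
  have hρδ' : ρ ≤ δ' / 2 := min_le_right _ _
  obtain ⟨v, s, hs, hsρ, hvρ, hvs, hbad⟩ := hx.2.2 ρ hρ
  have hse' : ‖s • e‖ = s * ‖e‖ := by rw [norm_smul, Real.norm_of_nonneg hs.le]
  have hxv : x + v ∈ G := hx.1 <| by
    rw [mem_ball, dist_eq_norm, add_sub_cancel_left]; nlinarith [norm_nonneg e]
  have hxvs : x + v + s • e ∈ G := hx.1 <| by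
    rw [mem_ball, dist_eq_norm, add_assoc, add_sub_cancel_left]
    nlinarith [norm_add_le v (s • e), norm_nonneg e]
  refine ⟨x + v, ε * s / (2 * K + 1), by positivity, ?_, ?_, ?_⟩
  · rw [dist_eq_norm, add_sub_cancel_left]; linarith
  · have hCr : (2 * K + 1) / (ε * θ) * (ε * s / (2 * K + 1)) = s / θ := by field_simp
    rw [dist_eq_norm, add_sub_cancel_left, hCr, le_div_iff₀ hθ]
    linarith
  · refine eq_empty_iff_forall_notMem.2 fun y ⟨hyz, hy⟩ => ?_
    have key := mul_le_norm_sub_of_mem_oscillationSet hf hy hxv hxvs hs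
      (by nlinarith [norm_nonneg e]) (by nlinarith [norm_nonneg e]) hbad
    rw [mem_ball, dist_eq_norm', lt_div_iff₀ (by positivity)] at hyz
    nlinarith [norm_nonneg (x + v - y)]

lemma exists_seq_norm_remainder_gt {T : E →L[ℝ] F} (h : ¬ HasFDerivAt f T x) :
    ∃ ε > 0, ∃ u : ℕ → E, Tendsto u atTop (𝓝 0) ∧
      ∀ n, ε * ‖u n‖ < ‖f (x + u n) - f x - T (u n)‖ := by
  rw [hasFDerivAt_iff_isLittleO_nhds_zero, Asymptotics.isLittleO_iff] at h
  push Not at h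
  obtain ⟨ε, hε, hfreq⟩ := h
  exact ⟨ε, hε, frequently_iff_seq_forall.1 hfreq⟩

lemma HasDerivAt.exists_pos_norm_sub_smul_le {φ : ℝ → F} {φ' g : F} {c : ℝ}
    (h : HasDerivAt φ φ' 0) (hg : ‖φ' - g‖ < c) :
    ∃ δ > 0, ∀ t ∈ Ioo 0 δ, ‖φ t - φ 0 - t • g‖ ≤ c * t := by
  rw [hasDerivAt_iff_isLittleO_nhds_zero, Asymptotics.isLittleO_iff] at h
  obtain ⟨δ, hδ, hball⟩ := Metric.eventually_nhds_iff.1 (h (sub_pos.2 hg))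
  refine ⟨δ, hδ, fun t ht => ?_⟩
  have h₁ := hball (y := t) (by rw [Real.dist_0_eq_abs, abs_of_pos ht.1]; exact ht.2)
  rw [zero_add, Real.norm_of_nonneg ht.1.le] at h₁
  have h₂ : ‖t • (φ' - g)‖ = t * ‖φ' - g‖ := by rw [norm_smul, Real.norm_of_nonneg ht.1.le]
  calc ‖φ t - φ 0 - t • g‖ = ‖(φ t - φ 0 - t • φ') + t • (φ' - g)‖ := by
        rw [smul_sub]; abel_nf
    _ ≤ (c - ‖φ' - g‖) * t + t * ‖φ' - g‖ := (norm_add_le _ _).trans (add_le_add h₁ h₂.le)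
    _ = c * t := by ring

lemma FrechetDiffAlong.hasFDerivAt {M : Submodule ℝ E} {T : E →L[ℝ] F}
    (hT : ∀ u, HasDerivAt (fun t : ℝ => f (x + t • u)) (T u) 0) (hM : FrechetDiffAlong f M x) :
    HasFDerivAt (fun v : M => f (x + v)) (T.comp M.subtypeL) 0 := by
  have hD := DifferentiableAt.hasFDerivAt hM
  convert hD using 1
  ext v
  have hline : HasDerivAt (fun t : ℝ => t • v) v 0 := by
    simpa using (hasDerivAt_id (0 : ℝ)).smul_const v
  have hcomp := hD.comp_hasDerivAt_of_eq 0 hline (zero_smul ℝ v).symm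
  simp only [Function.comp_def, Submodule.coe_smul] at hcomp
  exact (hT v).unique hcomp

lemma FrechetDiffAlong.exists_pos_norm_remainder_le {M : Submodule ℝ E} {T : E →L[ℝ] F}
    (hT : ∀ u, HasDerivAt (fun t : ℝ => f (x + t • u)) (T u) 0) (hM : FrechetDiffAlong f M x)
    {c : ℝ} (hc : 0 < c) :
    ∃ r > 0, ∀ v ∈ M, ‖v‖ < r → ‖f (x + v) - f x - T v‖ ≤ c * ‖v‖ := by
  have h := hasFDerivAt_iff_isLittleO_nhds_zero.1 (hM.hasFDerivAt hT)
  obtain ⟨r, hr, hball⟩ := Metric.eventually_nhds_iff.1 (Asymptotics.isLittleO_iff.1 h hc)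
  refine ⟨r, hr, fun v hv hvr => ?_⟩
  simpa using hball (y := ⟨v, hv⟩) (by simpa using hvr)

lemma exists_frequently_norm_sub_lt {Z : Type*} [NormedAddCommGroup Z] [NormedSpace ℝ Z]
    [FiniteDimensional ℝ Z] {ξ : ℕ → Z} {R : ℝ} (hξ : ∀ n, ‖ξ n‖ ≤ R) :
    ∃ l, ∀ τ > 0, ∃ᶠ n in atTop, ‖ξ n - l‖ < τ := by
  obtain ⟨l, -, φ, hφ, hlim⟩ := tendsto_subseq_of_bounded (isBounded_closedBall (x := 0) (r := R))
    (fun n => mem_closedBall_zero_iff.2 (hξ n))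
  refine ⟨l, fun τ hτ => hφ.tendsto_atTop.frequently ?_⟩
  simpa only [dist_eq_norm, Function.comp_apply] using (Metric.tendsto_nhds.1 hlim τ hτ).frequently

lemma Submodule.Quotient.exists_mem_norm_sub_lt {M : Submodule ℝ E} {w : E} {r : ℝ}
    (h : ‖(Submodule.Quotient.mk w : E ⧸ M)‖ < r) : ∃ v ∈ M, ‖w - v‖ < r := by
  obtain ⟨m, hm, hmr⟩ := Submodule.Quotient.norm_mk_lt (Submodule.Quotient.mk w : E ⧸ M)
    (sub_pos.2 h)
  refine ⟨w - m, (Submodule.Quotient.eq M).1 hm.symm, ?_⟩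
  rw [sub_sub_cancel]
  linarith

lemma exists_frequently_norm_sub_mk_lt (M : Submodule ℝ E) [IsClosed (M : Set E)]
    [FiniteDimensional ℝ (E ⧸ M)] {a : ℕ → E} (ha : DenseRange a) (u : ℕ → E) {τ : ℝ}
    (hτ : 0 < τ) : ∃ i, ∃ᶠ n in atTop,
      ‖‖u n‖⁻¹ • (Submodule.Quotient.mk (u n) : E ⧸ M) - Submodule.Quotient.mk (a i)‖ < τ := by
  obtain ⟨l, hl⟩ := exists_frequently_norm_sub_lt (R := 1)
    (ξ := fun n => ‖u n‖⁻¹ • (Submodule.Quotient.mk (u n) : E ⧸ M)) fun n => by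
      rw [norm_smul, norm_inv, norm_norm]
      exact inv_mul_le_one_of_le₀ (Submodule.Quotient.norm_mk_le M _) (norm_nonneg _)
  obtain ⟨e₀, rfl⟩ := Submodule.Quotient.mk_surjective M l
  obtain ⟨i, hi⟩ := ha.exists_dist_lt e₀ (half_pos hτ)
  rw [dist_eq_norm] at hi
  have he : ‖(Submodule.Quotient.mk e₀ : E ⧸ M) - Submodule.Quotient.mk (a i)‖ < τ / 2 := by
    rw [← Submodule.Quotient.mk_sub]
    exact (Submodule.Quotient.norm_mk_le M _).trans_lt hi
  refine ⟨i, (hl _ (half_pos hτ)).mono fun n hn => ?_⟩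
  linarith [norm_sub_le_norm_sub_add_norm_sub
    (‖u n‖⁻¹ • (Submodule.Quotient.mk (u n) : E ⧸ M)) (Submodule.Quotient.mk e₀)
    (Submodule.Quotient.mk (a i))]

lemma exists_mem_norm_sub_add_smul_lt {M : Submodule ℝ E} {u e : E} {τ : ℝ} (hu : u ≠ 0)
    (h : ‖‖u‖⁻¹ • (Submodule.Quotient.mk u : E ⧸ M) - Submodule.Quotient.mk e‖ < τ) :
    ∃ v ∈ M, ‖u - (v + ‖u‖ • e)‖ < τ * ‖u‖ := by
  have hu' : 0 < ‖u‖ := norm_pos_iff.2 hu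
  have hq : ‖(Submodule.Quotient.mk (u - ‖u‖ • e) : E ⧸ M)‖ < τ * ‖u‖ := by
    have hid : (Submodule.Quotient.mk (u - ‖u‖ • e) : E ⧸ M) = ‖u‖ •
        (‖u‖⁻¹ • Submodule.Quotient.mk u - Submodule.Quotient.mk e) := by
      rw [smul_sub, smul_smul, mul_inv_cancel₀ hu'.ne', one_smul, Submodule.Quotient.mk_sub,
        Submodule.Quotient.mk_smul]
    rw [hid, norm_smul, norm_norm, mul_comm τ]
    exact mul_lt_mul_of_pos_left h hu'
  obtain ⟨v, hvM, hv⟩ := Submodule.Quotient.exists_mem_norm_sub_lt hq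
  exact ⟨v, hvM, by rwa [sub_add_eq_sub_sub_swap]⟩

lemma LipschitzOnWith.exists_increment_gt (hf : LipschitzOnWith K f G) (T : E →L[ℝ] F)
    {M : Submodule ℝ E} {w e : E} (g : F) {r₀ c τ ε : ℝ} (hc : 0 ≤ c) (hball : ball x r₀ ⊆ G)
    (hw : ε * ‖w‖ < ‖f (x + w) - f x - T w‖)
    (hdir : ‖‖w‖⁻¹ • (Submodule.Quotient.mk w : E ⧸ M) - Submodule.Quotient.mk e‖ < τ)
    (hτ : τ ≤ 1) (hwr₀ : (2 + ‖e‖) * ‖w‖ < r₀)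
    (hM : ∀ v ∈ M, ‖v‖ ≤ (2 + ‖e‖) * ‖w‖ → ‖f (x + v) - f x - T v‖ ≤ c * ‖v‖) :
    ∃ v ∈ M, ‖v‖ ≤ (2 + ‖e‖) * ‖w‖ ∧
      (ε - c * (2 + ‖e‖) - ‖T e - g‖ - (K + ‖T‖) * τ) * ‖w‖ <
        ‖f (x + v + ‖w‖ • e) - f (x + v) - ‖w‖ • g‖ := by
  have hw0 : w ≠ 0 := by
    rintro rfl
    simp at hw
  obtain ⟨v, hvM, hm⟩ := exists_mem_norm_sub_add_smul_lt hw0 hdir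
  have hm' : ‖w - (v + ‖w‖ • e)‖ ≤ ‖w‖ := by nlinarith [norm_nonneg w]
  have hse : ‖‖w‖ • e‖ = ‖w‖ * ‖e‖ := by rw [norm_smul, norm_norm]
  have hvs : ‖v + ‖w‖ • e‖ ≤ 2 * ‖w‖ := by
    linarith [_root_.norm_sub_norm_le (v + ‖w‖ • e) w, norm_sub_rev w (v + ‖w‖ • e)]
  have hv : ‖v‖ ≤ (2 + ‖e‖) * ‖w‖ := by
    have := _root_.norm_sub_le (v + ‖w‖ • e) (‖w‖ • e)
    rw [add_sub_cancel_right] at this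
    linarith
  have hGw : x + w ∈ G := hball <| by
    rw [mem_ball, dist_eq_norm, add_sub_cancel_left]; nlinarith [norm_nonneg e, norm_nonneg w]
  have hGvs : x + (v + ‖w‖ • e) ∈ G := hball <| by
    rw [mem_ball, dist_eq_norm, add_sub_cancel_left]; nlinarith [norm_nonneg e, norm_nonneg w]
  have key := hf.norm_remainder_le_increment T g (norm_nonneg w) hGw hGvs
  refine ⟨v, hvM, hv, ?_⟩
  nlinarith [hM v hvM hv, K.coe_nonneg, norm_nonneg T, norm_nonneg w]

theorem exists_mem_oscillationSet {a : ℕ → E} (ha : DenseRange a) {b : ℕ → F}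
    (hb : DenseRange b) (hG : IsOpen G) (hf : LipschitzOnWith K f G) (hx : x ∈ G)
    {T : E →L[ℝ] F} (hT : ∀ u, HasDerivAt (fun t : ℝ => f (x + t • u)) (T u) 0)
    (M : Submodule ℝ E) [IsClosed (M : Set E)] [FiniteDimensional ℝ (E ⧸ M)]
    (hM : FrechetDiffAlong f M x) (hnT : ¬ HasFDerivAt f T x) :
    ∃ i j k l n : ℕ, x ∈ oscillationSet f G (a i) (b j) (1 / (k + 1)) (1 / (l + 1))
      (1 / (n + 1)) := by
  obtain ⟨ε, hε, u, hu0, hu⟩ := exists_seq_norm_remainder_gt hnT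
  obtain ⟨k, hk⟩ := exists_nat_one_div_lt (by positivity : 0 < ε / 4)
  set ε₃ : ℝ := 1 / (k + 1)
  have hε₃ : 0 < ε₃ := Nat.one_div_pos_of_nat
  have hε₃1 : ε₃ ≤ 1 := div_le_one_of_le₀ (by simp) (by positivity)
  -- `τ` bounds both `‖T e - g‖` and the error of `w ≈ v + ‖w‖ • e`; together they cost
  -- `(1 + K + ‖T‖) τ = ε₃`.
  set τ : ℝ := ε₃ / (1 + K + ‖T‖)
  have hτ : 0 < τ := by positivity
  have hτε₃ : τ * (1 + K + ‖T‖) = ε₃ := by simp only [τ]; field_simp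
  have hτ₁ : τ ≤ ε₃ := hτε₃ ▸ le_mul_of_one_le_right hτ.le
    (by linarith [K.coe_nonneg, norm_nonneg T])
  obtain ⟨i, hi⟩ := exists_frequently_norm_sub_mk_lt M ha u hτ
  obtain ⟨j, hj⟩ := hb.exists_dist_lt (T (a i)) hτ
  set e := a i
  set g := b j
  rw [dist_eq_norm] at hj
  obtain ⟨n, hn⟩ := exists_nat_one_div_lt (by positivity : (0 : ℝ) < 1 / (2 + ‖e‖))
  obtain ⟨r₀, hr₀, hr₀G⟩ := Metric.isOpen_iff.1 hG x hx
  obtain ⟨δ₀, hδ₀, hslope⟩ := (hT e).exists_pos_norm_sub_smul_le (hj.trans_le hτ₁)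
  obtain ⟨p, hp⟩ := exists_nat_one_div_lt (lt_min hr₀ hδ₀)
  refine ⟨i, j, k, p, n, (ball_subset_ball (hp.trans_le (min_le_left _ _)).le).trans hr₀G,
    fun t ht => ?_, fun ρ hρ => ?_⟩
  · simpa only [zero_smul, add_zero] using hslope t ⟨ht.1, ht.2.trans_lt (hp.trans_le (min_le_right _ _))⟩
  set c := ε / (4 * (2 + ‖e‖))
  have hc : c * (2 + ‖e‖) = ε / 4 := by simp only [c]; field_simp
  obtain ⟨r, hr, hMr⟩ := hM.exists_pos_norm_remainder_le hT (c := c) (by positivity)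
  have hsmall : ∀ᶠ N in atTop, (2 + ‖e‖) * ‖u N‖ < min ρ (min r r₀) := by
    have := (tendsto_norm_zero.comp hu0).const_mul (2 + ‖e‖)
    rw [mul_zero] at this
    exact this.eventually (gt_mem_nhds (lt_min hρ (lt_min hr hr₀)))
  obtain ⟨N, hN, hNdir⟩ := (hsmall.and_frequently hi).exists
  simp only [lt_min_iff] at hN
  obtain ⟨v, hvM, hv, hbad⟩ := hf.exists_increment_gt T g (by positivity) hr₀G (hu N) hNdir
    (hτ₁.trans hε₃1) hN.2.2 fun v hv hvle => hMr v hv (hvle.trans_lt hN.2.1)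
  have hs : 0 < ‖u N‖ := norm_pos_iff.2 fun h => by simpa [h] using hu N
  have hθ : 1 / ((n : ℝ) + 1) * ‖v‖ ≤ ‖u N‖ := by
    calc 1 / ((n : ℝ) + 1) * ‖v‖ ≤ 1 / (2 + ‖e‖) * ((2 + ‖e‖) * ‖u N‖) := by gcongr
      _ = ‖u N‖ := by field_simp
  refine ⟨v, ‖u N‖, hs, by nlinarith [norm_nonneg e], hv.trans hN.1.le, hθ, ?_⟩
  have hcoef : 2 * ε₃ ≤ ε - c * (2 + ‖e‖) - ‖T e - g‖ - (K + ‖T‖) * τ := by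
    nlinarith [K.coe_nonneg, norm_nonneg T]
  nlinarith
end

theorem sigmaPorous_gateaux_finiteCodim_not_frechet
    [TopologicalSpace.SeparableSpace X] [TopologicalSpace.SeparableSpace Y]
    (G : Set X) (hG : IsOpen G) (f : X → Y) (K : NNReal) (hf : LipschitzOnWith K f G) :
    SigmaPorous {x ∈ G | GateauxDiffAt f x ∧
      (∃ M : Submodule ℝ X, IsClosed (M : Set X) ∧ FiniteDimensional ℝ (X ⧸ M) ∧
        FrechetDiffAlong f M x) ∧
      ¬ DifferentiableAt ℝ f x} := by
  open TopologicalSpace in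
  refine sigmaPorous_of_subset_iUnion (ι := ℕ × ℕ × ℕ × ℕ × ℕ)
    (u := fun p => oscillationSet f G (denseSeq X p.1) (denseSeq Y p.2.1) (1 / (p.2.2.1 + 1))
      (1 / (p.2.2.2.1 + 1)) (1 / (p.2.2.2.2 + 1)))
    (fun p => porous_oscillationSet hf _ _ Nat.one_div_pos_of_nat Nat.one_div_pos_of_nat
      Nat.one_div_pos_of_nat) ?_
  rintro x ⟨hxG, ⟨T, hT⟩, ⟨M, hMc, hMf, hM⟩, hnF⟩
  obtain ⟨i, j, k, l, n, hx⟩ := exists_mem_oscillationSet (denseRange_denseSeq X)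
    (denseRange_denseSeq Y) hG hf hxG hT M hM fun h => hnF h.differentiableAt
  exact mem_iUnion.2 ⟨(i, j, k, l, n), hx⟩
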